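/- Let G be a finite group and U, V ≤ G × G subgroups each containing the diagonal Δ(G), such that G' ∩ k₁(U) = k₁(U') and G' ∩ k₁(V) = k₁(V') (i.e., U and V are extensible). Then G' ∩ k₁(U∗V) = k₁((U∗V)') if and only if k₁(U∗V) ∩ G' = (k₁(U) ∩ G')(k₁(V) ∩ G'). -/

import Mathlib

def twistedDiag {G : Type*} [Group G] (φ : G ≃* G) : Subgroup (G × G) :=
  ((MonoidHom.id G).prod φ.toMonoidHom).range

def k1 {G H : Type*} [Group G] [Group H] (U : Subgroup (G × H)) : Subgroup G :=
  U.comap (MonoidHom.inl G H)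

def k2 {G H : Type*} [Group G] [Group H] (U : Subgroup (G × H)) : Subgroup H :=
  U.comap (MonoidHom.inr G H)

/-- The ∗-product of subgroups `U ≤ F × G` and `V ≤ G × H`. -/
def starProd {F G H : Type*} [Group F] [Group G] [Group H]
    (U : Subgroup (F × G)) (V : Subgroup (G × H)) : Subgroup (F × H) where
  carrier := {x | ∃ g : G, (x.1, g) ∈ U ∧ (g, x.2) ∈ V}
  one_mem' := ⟨1, U.one_mem, V.one_mem⟩
  mul_mem' := by
    rintro a b ⟨x, hx1, hx2⟩ ⟨y, hy1, hy2⟩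
    exact ⟨x * y, U.mul_mem hx1 hy1, V.mul_mem hx2 hy2⟩
  inv_mem' := by
    rintro a ⟨x, h1, h2⟩
    exact ⟨x⁻¹, U.inv_mem h1, V.inv_mem h2⟩

open Pointwise

/-- The diagonal subgroup `Δ(G) = {(g,g)} ≤ G × G`. -/
def diag (G : Type*) [Group G] : Subgroup (G × G) :=
  twistedDiag (MulEquiv.refl G)

/-!
Write `W = U ∗ V`. Since `W'` is contained in `U' ∗ V'`, every `g ∈ k₁(W')` comes with some `x`
such that `(g, x) ∈ U'` and `(x, 1) ∈ V'`; multiplying by the diagonal element `(x⁻¹, x⁻¹) ∈ U`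
splits `g = (g x⁻¹) · x` with `g x⁻¹ ∈ k₁(U) ∩ G'` and `x ∈ k₁(V) ∩ G'`. Conversely, extensibility
of `U` and `V` puts `k₁(U) ∩ G'` and `k₁(V) ∩ G'` inside `k₁(U') ∪ k₁(V') ⊆ k₁(W')`.
Hence `k₁(W') = (k₁(U) ∩ G')(k₁(V) ∩ G')`, and as `k₁(W') ≤ k₁(W) ∩ G'` always holds, both sides of
the equivalence say that `k₁(W) ∩ G'` equals this product.
-/

lemma mem_diag {G : Type*} [Group G] (g : G) : (g, g) ∈ diag G := ⟨g, rfl⟩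

lemma mem_k1 {G H : Type*} [Group G] [Group H] {U : Subgroup (G × H)} {g : G} :
    g ∈ k1 U ↔ ((g, 1) : G × H) ∈ U := Iff.rfl

lemma k1_commutator_le_inf {G H : Type*} [Group G] [Group H] (U : Subgroup (G × H)) :
    k1 ⁅U, U⁆ ≤ k1 U ⊓ commutator G := by
  refine le_inf (Subgroup.comap_mono U.commutator_le_self) fun g hg => ?_
  have hfst := Subgroup.mem_map_of_mem (MonoidHom.fst G H)
    (Subgroup.commutator_mono le_top le_top hg : ((g, 1) : G × H) ∈ ⁅(⊤ : Subgroup (G × H)), ⊤⁆)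
  rw [Subgroup.map_commutator] at hfst
  exact Subgroup.commutator_mono le_top le_top hfst

section StarProd

variable {G : Type*} [Group G]

lemma le_starProd_left (U : Subgroup (G × G)) {V : Subgroup (G × G)} (hV : diag G ≤ V) :
    U ≤ starProd U V :=
  fun x hx => ⟨x.2, hx, hV (mem_diag x.2)⟩

lemma le_starProd_right {U : Subgroup (G × G)} (hU : diag G ≤ U) (V : Subgroup (G × G)) :
    V ≤ starProd U V :=
  fun x hx => ⟨x.1, hU (mem_diag x.1), hx⟩

open scoped commutatorElement in
lemma commutator_starProd_le {F H : Type*} [Group F] [Group H]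
    (U : Subgroup (F × G)) (V : Subgroup (G × H)) :
    ⁅starProd U V, starProd U V⁆ ≤ starProd ⁅U, U⁆ ⁅V, V⁆ := by
  rw [Subgroup.commutator_le]
  rintro p ⟨x, hx1, hx2⟩ q ⟨y, hy1, hy2⟩
  exact ⟨⁅x, y⁆, Subgroup.commutator_mem_commutator hx1 hy1,
    Subgroup.commutator_mem_commutator hx2 hy2⟩

lemma coe_k1_commutator_starProd_subset {U : Subgroup (G × G)} (hU : diag G ≤ U)
    (V : Subgroup (G × G)) :
    (k1 ⁅starProd U V, starProd U V⁆ : Set G) ⊆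
      ((k1 U ⊓ commutator G : Subgroup G) : Set G) *
        ((k1 V ⊓ commutator G : Subgroup G) : Set G) := by
  intro g hg
  have hgG' : g ∈ commutator G := (k1_commutator_le_inf _ hg).2
  obtain ⟨x, hgx, hx1⟩ := commutator_starProd_le U V hg
  have hxV : x ∈ k1 V ⊓ commutator G := k1_commutator_le_inf V hx1
  have hgxU : g * x⁻¹ ∈ k1 U := by
    have := U.mul_mem (U.commutator_le_self hgx) (hU (mem_diag x⁻¹))
    exact mem_k1.mpr (by simpa using this)
  exact ⟨g * x⁻¹, ⟨hgxU, (commutator G).mul_mem hgG' ((commutator G).inv_mem hxV.2)⟩, x, hxV, inv_mul_cancel_right g x⟩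

lemma mul_subset_coe_k1_commutator_starProd {U V : Subgroup (G × G)}
    (hU : diag G ≤ U) (hV : diag G ≤ V)
    (hUe : commutator G ⊓ k1 U ≤ k1 ⁅U, U⁆) (hVe : commutator G ⊓ k1 V ≤ k1 ⁅V, V⁆) :
    ((k1 U ⊓ commutator G : Subgroup G) : Set G) *
        ((k1 V ⊓ commutator G : Subgroup G) : Set G) ⊆
      (k1 ⁅starProd U V, starProd U V⁆ : Set G) := by
  have hUW := le_starProd_left U hV
  have hVW := le_starProd_right hU V
  rintro - ⟨a, ⟨haU, haG'⟩, b, ⟨hbV, hbG'⟩, rfl⟩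
  exact mul_mem (Subgroup.commutator_mono hUW hUW (hUe ⟨haG', haU⟩))
    (Subgroup.commutator_mono hVW hVW (hVe ⟨hbG', hbV⟩))

end StarProd

theorem starProd_extensible_iff_general {G : Type*} [Group G]
    (U V : Subgroup (G × G)) (hU : diag G ≤ U) (hV : diag G ≤ V)
    (hUe : commutator G ⊓ k1 U = k1 ⁅U, U⁆)
    (hVe : commutator G ⊓ k1 V = k1 ⁅V, V⁆) :
    commutator G ⊓ k1 (starProd U V) = k1 ⁅starProd U V, starProd U V⁆ ↔
      (k1 (starProd U V) ⊓ commutator G : Subgroup G) =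
        ((k1 U ⊓ commutator G : Subgroup G) : Set G) *
          ((k1 V ⊓ commutator G : Subgroup G) : Set G) := by
  rw [← (coe_k1_commutator_starProd_subset hU V).antisymm
      (mul_subset_coe_k1_commutator_starProd hU hV hUe.le hVe.le),
    SetLike.coe_set_eq, inf_comm]

theorem starProd_extensible_iff {G : Type*} [Group G] [Finite G]
    (U V : Subgroup (G × G)) (hU : diag G ≤ U) (hV : diag G ≤ V)
    (hUe : commutator G ⊓ k1 U = k1 ⁅U, U⁆)
    (hVe : commutator G ⊓ k1 V = k1 ⁅V, V⁆) :
    commutator G ⊓ k1 (starProd U V) = k1 ⁅starProd U V, starProd U V⁆ ↔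
      (k1 (starProd U V) ⊓ commutator G : Subgroup G) =
        ((k1 U ⊓ commutator G : Subgroup G) : Set G) *
          ((k1 V ⊓ commutator G : Subgroup G) : Set G) :=
  starProd_extensible_iff_general U V hU hV hUe hVe
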